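/- For integers n ≥ r > 1, k ≥ 1, and l ≥ 1, the (l,r)-Stirling numbers of the second kind satisfy S2_r(n,k) = S2_{r-1}(n,k) − (r-1)^l · S2_{r-1}(n-1,k), where the subscript denotes the parameter r. -/
import Mathlib

/-- The `(l,r)`-Stirling numbers of the second kind. -/
def S2 (l r : ℕ) : ℕ → ℕ → ℕ
  | n, k =>
    if _h1 : n < r then 0
    else if _h2 : n = r then (if k = r then 1 else 0)
    else S2 l r (n - 1) (k - 1) + k ^ l * S2 l r (n - 1) k
termination_by n _ => n
decreasing_by all_goals omega

lemma key (l r : ℕ) (hl : 1 ≤ l) (hr : 1 < r) : ∀ n, r ≤ n → ∀ k,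
    (S2 l (r-1) n k : ℤ) = S2 l r n k + ((r-1)^l : ℕ) * S2 l (r-1) (n-1) k := by
  intro n hn
  induction n, hn using Nat.le_induction with
  | base =>
    intro k
    conv_lhs => rw [S2]
    rw [dif_neg (by omega), dif_neg (by omega)]
    have hb : ∀ j, S2 l (r-1) (r-1) j = if j = r-1 then 1 else 0 := by
      intro j; rw [S2]; rw [dif_neg (by omega), dif_pos rfl]
    rw [show S2 l r r k = if k = r then 1 else 0 by
      rw [S2]; rw [dif_neg (by omega), dif_pos rfl]]
    rw [hb (k-1), hb k]
    split_ifs <;> first | (exfalso; omega) | (subst_vars; push_cast; ring)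
  | succ n hn ih =>
    intro k
    have e1 : S2 l (r-1) (n+1) k = S2 l (r-1) n (k-1) + k ^ l * S2 l (r-1) n k := by
      rw [S2]; rw [dif_neg (by omega), dif_neg (by omega)]
      simp [Nat.add_sub_cancel]
    have e2 : S2 l r (n+1) k = S2 l r n (k-1) + k ^ l * S2 l r n k := by
      rw [S2]; rw [dif_neg (by omega), dif_neg (by omega)]
      simp [Nat.add_sub_cancel]
    have e3 : (S2 l (r-1) n k : ℤ) =
        S2 l (r-1) (n-1) (k-1) + (k:ℤ) ^ l * S2 l (r-1) (n-1) k := by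
      conv_lhs => rw [S2]
      rw [dif_neg (by omega), dif_neg (by omega)]
      push_cast; ring
    have i1 := ih (k-1)
    have i2 := ih k
    rw [e1, e2]
    simp only [Nat.add_sub_cancel]
    push_cast at i1 i2 e3 ⊢
    linear_combination i1 + (k:ℤ)^l * i2 - (((r-1:ℕ)):ℤ)^l * e3

theorem stmt3 (l r n k : ℕ) (hr : 1 < r) (hn : r ≤ n) (hk : 1 ≤ k) (hl : 1 ≤ l) :
    (S2 l r n k : ℤ) =
      (S2 l (r - 1) n k : ℤ) - ((r - 1 : ℕ) ^ l : ℤ) * (S2 l (r - 1) (n - 1) k : ℤ) := by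
  have h := key l r hl hr n hn k
  push_cast at h ⊢
  linarith
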